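/- arXiv:2107.01120 — 6 statements merged into one kernel-verified Lean document; each statement's English description precedes it below -/
import Mathlib

section
/- For real numbers D ≥ N ≥ 1, σ < 1, τ > 0 and s > 0, define ψ(σ,τ;ξ) := (ξ^σ − τ^σ)/σ if σ ≠ 0 and := log(ξ/τ) if σ = 0, and A(z) := −(z−τ)²/(4D) + (1 − σN/D)·log z + (s/D)·ψ(σ,τ;z) for z > 0. Then A is strictly concave on (0,∞), there exists a unique z > 0 with A′(z) = 0, this point ζ is the unique maximizer of A on (0,∞), and it satisfies ζ > τ and ζ² = τζ + 2s·ζ^σ + 2D·(1 − σN/D). -/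
noncomputable section

/-- The function ψ(σ,τ;ξ) of the generalized gamma process. -/
def psiR (σ τ ξ : ℝ) : ℝ := if σ = 0 then Real.log (ξ / τ) else (ξ ^ σ - τ ^ σ) / σ

/-- The saddle-point function A(z). -/
def Afun (D N σ τ s : ℝ) : ℝ → ℝ := fun z =>
  -(z - τ) ^ 2 / (4 * D) + (1 - σ * N / D) * Real.log z + (s / D) * psiR σ τ z

/-! ψ is normalised so that ∂ψ/∂ξ = ξ^(σ-1) in both cases, hence
A′(z) = -(z-τ)/(2D) + (1 - σN/D)/z + (s/D) z^(σ-1). For σ < 1 ≤ N ≤ D the first term is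
strictly decreasing on (0,∞) and the other two are nonincreasing, so A is strictly concave.
A′(τ) > 0 and A′ is negative far to the right, so A′ has exactly one zero ζ, which lies to the
right of τ and is the strict maximiser. Clearing the denominator 2Dζ in A′(ζ) = 0 gives the
quadratic relation for ζ. -/

open Real Set

theorem StrictConcaveOn.lt_of_hasDerivAt_zero {S : Set ℝ} {f : ℝ → ℝ} {x y : ℝ}
    (hf : StrictConcaveOn ℝ S f) (hx : x ∈ S) (hy : y ∈ S) (hyx : y ≠ x)
    (hf' : HasDerivAt f 0 x) : f y < f x := by
  rcases hyx.lt_or_gt with hlt | hgt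
  · have := hf.lt_slope_of_hasDerivAt hy hx hlt hf'
    rw [slope_def_field, lt_div_iff₀ (sub_pos.2 hlt), zero_mul] at this
    linarith
  · have := hf.slope_lt_of_hasDerivAt hx hy hgt hf'
    rw [slope_def_field, div_lt_iff₀ (sub_pos.2 hgt), zero_mul] at this
    linarith

theorem hasDerivAt_psiR (σ : ℝ) {τ z : ℝ} (hτ : τ ≠ 0) (hz : 0 < z) :
    HasDerivAt (psiR σ τ) (z ^ (σ - 1)) z := by
  by_cases hσ : σ = 0
  · have hψ : psiR σ τ = fun ξ => log (ξ / τ) := by funext ξ; simp [psiR, hσ]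
    have h := ((hasDerivAt_id' z).div_const τ).log (div_ne_zero hz.ne' hτ)
    rw [hψ, hσ, zero_sub, rpow_neg_one]
    convert h using 1
    field_simp
  · have hψ : psiR σ τ = fun ξ => (ξ ^ σ - τ ^ σ) / σ := by funext ξ; simp [psiR, hσ]
    have h := ((hasDerivAt_rpow_const (p := σ) (Or.inl hz.ne')).sub_const (τ ^ σ)).div_const σ
    rw [mul_div_cancel_left₀ _ hσ] at h
    rwa [hψ]

def dAfun (D N σ τ s z : ℝ) : ℝ :=
  -(z - τ) / (2 * D) + (1 - σ * N / D) / z + s / D * z ^ (σ - 1)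

section
variable {D N σ τ s : ℝ}

theorem hasDerivAt_Afun (hτ : τ ≠ 0) {z : ℝ} (hz : 0 < z) :
    HasDerivAt (Afun D N σ τ s) (dAfun D N σ τ s z) z := by
  have h := (((((hasDerivAt_id' z).sub_const τ).pow 2).neg.div_const (4 * D)).add
    ((hasDerivAt_log hz.ne').const_mul (1 - σ * N / D))).add
    ((hasDerivAt_psiR σ hτ hz).const_mul (s / D))
  refine HasDerivAt.congr_deriv (f := Afun D N σ τ s) h ?_
  rw [dAfun]
  norm_num
  ring

theorem continuousOn_dAfun : ContinuousOn (dAfun D N σ τ s) (Ioi 0) :=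
  (((continuousOn_id.sub continuousOn_const).neg.div_const _).add
    (continuousOn_const.div continuousOn_id fun _ hz => ne_of_gt hz)).add
    ((continuousOn_id.rpow_const fun _ hz => Or.inl (ne_of_gt hz)).const_smul (s / D))

theorem strictAntiOn_dAfun (hD : 0 < D) (hc : 0 ≤ 1 - σ * N / D) (hσ : σ ≤ 1) (hs : 0 ≤ s) :
    StrictAntiOn (dAfun D N σ τ s) (Ioi 0) := by
  intro x hx y hy hxy
  have hlin : -(y - τ) / (2 * D) < -(x - τ) / (2 * D) := by gcongr
  have hinv : (1 - σ * N / D) / y ≤ (1 - σ * N / D) / x := by gcongr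
  have hpow : y ^ (σ - 1) ≤ x ^ (σ - 1) := rpow_le_rpow_of_nonpos hx hxy.le (by linarith)
  have : s / D * y ^ (σ - 1) ≤ s / D * x ^ (σ - 1) := by gcongr
  simp only [dAfun]
  linarith

theorem dAfun_self_pos (hD : 0 < D) (hc : 0 < 1 - σ * N / D) (hτ : 0 < τ) (hs : 0 ≤ s) :
    0 < dAfun D N σ τ s τ := by
  simp only [dAfun, sub_self, neg_zero, zero_div, zero_add]
  positivity

theorem dAfun_neg_far_right (hD : 0 < D) (hc : 0 ≤ 1 - σ * N / D) (hσ : σ ≤ 1) (hτ : 0 ≤ τ)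
    (hs : 0 ≤ s) :
    dAfun D N σ τ s (τ + 2 * D * (1 - σ * N / D) + 2 * s + 1) < 0 := by
  set c := 1 - σ * N / D
  set b := τ + 2 * D * c + 2 * s + 1
  have hb : 1 ≤ b := by
    have : 0 ≤ D * c := by positivity
    linarith
  have hlin : -(b - τ) / (2 * D) = -c - s / D - 1 / (2 * D) := by field_simp; ring
  have hinv : c / b ≤ c := div_le_self hc hb
  have hpow : s / D * b ^ (σ - 1) ≤ s / D :=
    mul_le_of_le_one_right (by positivity) (rpow_le_one_of_one_le_of_nonpos hb (by linarith))
  have : 0 < 1 / (2 * D) := by positivity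
  simp only [dAfun, hlin]
  linarith

theorem dAfun_eq_zero_iff (hD : D ≠ 0) {z : ℝ} (hz : 0 < z) :
    dAfun D N σ τ s z = 0 ↔ z ^ 2 = τ * z + 2 * s * z ^ σ + 2 * D * (1 - σ * N / D) := by
  have hcleared : dAfun D N σ τ s z * (2 * D * z) =
      τ * z + 2 * s * z ^ σ + 2 * D * (1 - σ * N / D) - z ^ 2 := by
    rw [dAfun, rpow_sub_one hz.ne']
    field_simp
    ring
  rw [← mul_left_inj' (by positivity : 2 * D * z ≠ 0), hcleared, zero_mul, sub_eq_zero, eq_comm]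

theorem exists_gt_dAfun_eq_zero (hD : 0 < D) (hc : 0 < 1 - σ * N / D) (hσ : σ ≤ 1)
    (hτ : 0 < τ) (hs : 0 ≤ s) : ∃ ζ, τ < ζ ∧ dAfun D N σ τ s ζ = 0 := by
  have hτb : τ ≤ τ + 2 * D * (1 - σ * N / D) + 2 * s + 1 := by
    have : 0 ≤ D * (1 - σ * N / D) := by positivity
    linarith
  obtain ⟨ζ, hζ, hζ0⟩ := intermediate_value_Ioo' hτb
    (continuousOn_dAfun.mono fun z hz => hτ.trans_le hz.1)
    ⟨dAfun_neg_far_right hD hc.le hσ hτ.le hs, dAfun_self_pos hD hc hτ hs⟩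
  exact ⟨ζ, hζ.1, hζ0⟩

end

/-- A is strictly concave on (0,∞), has a unique positive critical point ζ,
which is the unique maximizer on (0,∞); moreover ζ > τ and
ζ² = τζ + 2sζ^σ + 2D(1 − σN/D). -/
theorem saddle_point_existence_uniqueness
    (D N σ τ s : ℝ) (hN : 1 ≤ N) (hND : N ≤ D) (hσ : σ < 1) (hτ : 0 < τ) (hs : 0 < s) :
    StrictConcaveOn ℝ (Set.Ioi (0 : ℝ)) (Afun D N σ τ s) ∧
    ∃ ζ : ℝ, 0 < ζ ∧ deriv (Afun D N σ τ s) ζ = 0 ∧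
      (∀ z : ℝ, 0 < z → deriv (Afun D N σ τ s) z = 0 → z = ζ) ∧
      (∀ z : ℝ, 0 < z → z ≠ ζ → Afun D N σ τ s z < Afun D N σ τ s ζ) ∧
      τ < ζ ∧
      ζ ^ 2 = τ * ζ + 2 * s * ζ ^ σ + 2 * D * (1 - σ * N / D) := by
  have hD : 0 < D := by linarith
  have hc : 0 < 1 - σ * N / D := by
    rw [sub_pos, div_lt_one hD]
    nlinarith
  have hA : ∀ z ∈ Ioi (0 : ℝ), HasDerivAt (Afun D N σ τ s) (dAfun D N σ τ s z) z :=
    fun z hz => hasDerivAt_Afun hτ.ne' hz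
  have hanti : StrictAntiOn (deriv (Afun D N σ τ s)) (Ioi 0) := fun x hx y hy hxy => by
    rw [(hA x hx).deriv, (hA y hy).deriv]
    exact strictAntiOn_dAfun hD hc.le hσ.le hs.le hx hy hxy
  have hconc : StrictConcaveOn ℝ (Ioi 0) (Afun D N σ τ s) :=
    (interior_Ioi (a := (0 : ℝ)) ▸ hanti).strictConcaveOn_of_deriv (convex_Ioi 0)
      fun z hz => (hA z hz).continuousAt.continuousWithinAt
  obtain ⟨ζ, hτζ, hζ⟩ := exists_gt_dAfun_eq_zero hD hc hσ.le hτ hs.le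
  have hζ0 : ζ ∈ Ioi (0 : ℝ) := hτ.trans hτζ
  have hζA : HasDerivAt (Afun D N σ τ s) 0 ζ := hζ ▸ hA ζ hζ0
  refine ⟨hconc, ζ, hζ0, hζA.deriv, fun z hz hz0 => hanti.injOn hz hζ0 (hz0.trans hζA.deriv.symm),
    fun z hz hzζ => hconc.lt_of_hasDerivAt_zero hζ0 hz hzζ hζA, hτζ,
    (dAfun_eq_zero_iff hD.ne' hζ0).1 hζ⟩
end
end

section
/- Let D ≥ N ≥ 1 be reals, σ < 1, τ > 0, s > 0. Extend A to the cut complex plane by A(z) := −(z−τ)²/(4D) + (1 − σN/D)·Log z + (s/D)·ψ(σ,τ;z) for z ∈ ℂ∖(−∞,0], where Log is the principal logarithm, z^σ := exp(σ·Log z), and ψ(σ,τ;z) := (z^σ − τ^σ)/σ if σ ≠ 0 and := Log(z/τ) if σ = 0. Let ζ > 0 be the unique positive solution of ∂_z A(z) = 0. Then for every real z: Re(A(ζ − i·z)) − A(ζ) ≥ z²/(4D). -/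
noncomputable section

/-- The function ψ(σ,τ;z) extended to the cut complex plane, with principal powers. -/
def psiC (σ τ : ℝ) (z : ℂ) : ℂ :=
  if σ = 0 then Complex.log (z / (τ : ℂ)) else (z ^ (σ : ℂ) - (τ : ℂ) ^ (σ : ℂ)) / (σ : ℂ)

/-- The saddle-point function A(z) extended to the cut complex plane. -/
def AfunC (D N σ τ s : ℝ) (z : ℂ) : ℂ :=
  -(z - (τ : ℂ)) ^ 2 / (4 * (D : ℂ)) + ((1 - σ * N / D : ℝ) : ℂ) * Complex.log z +
    ((s / D : ℝ) : ℂ) * psiC σ τ z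

/-!
Write `w = ζ - i z = r e^{iθ}` with `ζ = r cos θ > 0`, so `|θ| < π/2` and `r ≥ ζ`. The quadratic term
contributes exactly `z² / (4D)` on top of its value at `ζ`, and each of the remaining terms of
`Re A(w)` is at least its value at `ζ`: `log r ≥ log ζ`, and for `ψ` one compares
`Re w^σ = r^σ cos (σθ)` with `ζ^σ = r^σ (cos θ)^σ`. For `σ ≤ 0` this is `Re w^σ ≤ |w^σ| = r^σ ≤ ζ^σ`,
and for `0 ≤ σ ≤ 1` it is `(cos θ)^σ ≤ σ cos θ + 1 - σ ≤ cos (σθ)`, by weighted AM-GM and the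
concavity of `cos` on `[-π/2, π/2]`. The weights `1 - σN/D` and `s/D` are nonnegative.
-/

open Real Complex Set

theorem Real.cos_rpow_le_cos_mul {θ p : ℝ} (hθ : θ ∈ Icc (-(π / 2)) (π / 2)) (hp₀ : 0 ≤ p)
    (hp₁ : p ≤ 1) : Real.cos θ ^ p ≤ Real.cos (p * θ) := by
  have hcos : 0 ≤ Real.cos θ := Real.cos_nonneg_of_mem_Icc hθ
  have h0 : (0 : ℝ) ∈ Icc (-(π / 2)) (π / 2) := ⟨by linarith [pi_pos], by linarith [pi_pos]⟩
  have hconc := strictConcaveOn_cos_Icc.concaveOn.2 hθ h0 hp₀ (sub_nonneg.2 hp₁) (by ring)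
  simp only [smul_eq_mul, mul_zero, add_zero, Real.cos_zero] at hconc
  calc Real.cos θ ^ p = Real.cos θ ^ p * 1 ^ (1 - p) := by rw [one_rpow, mul_one]
    _ ≤ p * Real.cos θ + (1 - p) * 1 :=
      geom_mean_le_arith_mean2_weighted hp₀ (sub_nonneg.2 hp₁) hcos zero_le_one (by ring)
    _ ≤ Real.cos (p * θ) := hconc

namespace Complex

theorem rpow_re_le_re_cpow {w : ℂ} (hw : 0 < w.re) {p : ℝ} (hp₀ : 0 ≤ p) (hp₁ : p ≤ 1) :
    w.re ^ p ≤ (w ^ (p : ℂ)).re := by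
  have harg : arg w ∈ Icc (-(π / 2)) (π / 2) := abs_le.1 (abs_arg_le_pi_div_two_iff.2 hw.le)
  rw [cpow_ofReal_re, ← norm_mul_cos_arg w,
    Real.mul_rpow (norm_nonneg w) (Real.cos_nonneg_of_mem_Icc harg), mul_comm (arg w)]
  gcongr
  exact Real.cos_rpow_le_cos_mul harg hp₀ hp₁

theorem re_cpow_le_rpow_re {w : ℂ} (hw : 0 < w.re) {p : ℝ} (hp : p ≤ 0) :
    (w ^ (p : ℂ)).re ≤ w.re ^ p :=
  calc (w ^ (p : ℂ)).re ≤ ‖w ^ (p : ℂ)‖ := re_le_norm _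
    _ = ‖w‖ ^ p := norm_cpow_real w p
    _ ≤ w.re ^ p := rpow_le_rpow_of_nonpos hw (re_le_norm w) hp

end Complex

theorem psiR_re_le_re_psiC {σ τ : ℝ} (hσ : σ < 1) (hτ : 0 < τ) {w : ℂ} (hw : 0 < w.re) :
    psiR σ τ w.re ≤ (psiC σ τ w).re := by
  rcases lt_trichotomy σ 0 with hneg | rfl | hpos
  · simp only [psiR, psiC, hneg.ne, if_false]
    rw [div_ofReal_re, sub_re, ← Real.rpow_def]
    exact div_le_div_of_nonpos_of_le hneg.le (by linarith [re_cpow_le_rpow_re hw hneg.le])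
  · simp only [psiR, psiC, if_true, log_re, norm_div, norm_real, Real.norm_of_nonneg hτ.le]
    exact Real.log_le_log (by positivity) (by gcongr; exact re_le_norm w)
  · simp only [psiR, psiC, hpos.ne', if_false]
    rw [div_ofReal_re, sub_re, ← Real.rpow_def]
    exact div_le_div_of_nonneg_right (by linarith [rpow_re_le_re_cpow hw hpos.le hσ.le]) hpos.le

theorem re_AfunC (D N σ τ s : ℝ) (w : ℂ) :
    (AfunC D N σ τ s w).re = -((w.re - τ) ^ 2 - w.im ^ 2) / (4 * D) +
      (1 - σ * N / D) * Real.log ‖w‖ + s / D * (psiC σ τ w).re := by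
  have h4D : 4 * (D : ℂ) = ((4 * D : ℝ) : ℂ) := by push_cast; ring
  simp only [AfunC, h4D, add_re, div_ofReal_re, log_re, neg_re, sq, mul_re,
    sub_re, sub_im, ofReal_re, ofReal_im]
  ring

theorem Afun_re_add_le_re_AfunC {D N σ τ s : ℝ} (hσ : σ < 1) (hτ : 0 < τ)
    (hc : 0 ≤ 1 - σ * N / D) (hsD : 0 ≤ s / D) {w : ℂ} (hw : 0 < w.re) :
    Afun D N σ τ s w.re + w.im ^ 2 / (4 * D) ≤ (AfunC D N σ τ s w).re := by
  have hlog : Real.log w.re ≤ Real.log ‖w‖ := Real.log_le_log hw (re_le_norm w)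
  have hpsi := psiR_re_le_re_psiC hσ hτ hw
  rw [re_AfunC, Afun]
  have hquad : -(w.re - τ) ^ 2 / (4 * D) + w.im ^ 2 / (4 * D) =
      -((w.re - τ) ^ 2 - w.im ^ 2) / (4 * D) := by ring
  linarith [mul_le_mul_of_nonneg_left hlog hc, mul_le_mul_of_nonneg_left hpsi hsD]

theorem re_along_contour_ge_general
    (D N σ τ s : ℝ) (hN : 1 ≤ N) (hND : N ≤ D) (hσ : σ < 1) (hτ : 0 < τ) (hs : 0 < s)
    (ζ : ℝ) (hζpos : 0 < ζ) :
    ∀ z : ℝ, z ^ 2 / (4 * D) ≤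
      (AfunC D N σ τ s ((ζ : ℂ) - Complex.I * (z : ℂ))).re - Afun D N σ τ s ζ := by
  intro z
  have hD : 0 < D := by linarith
  have hc : 0 ≤ 1 - σ * N / D := by
    rw [sub_nonneg, div_le_one hD]
    nlinarith
  have hre : ((ζ : ℂ) - I * z).re = ζ := by simp
  have him : ((ζ : ℂ) - I * z).im = -z := by simp
  have key := Afun_re_add_le_re_AfunC hσ hτ hc (div_nonneg hs.le hD.le) (hre ▸ hζpos)
  rw [hre, him, neg_sq] at key
  linarith

/-- along the vertical contour through the saddle point ζ,
Re(A(ζ − i z)) − A(ζ) ≥ z²/(4D) for all real z. -/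
theorem re_along_contour_ge
    (D N σ τ s : ℝ) (hN : 1 ≤ N) (hND : N ≤ D) (hσ : σ < 1) (hτ : 0 < τ) (hs : 0 < s)
    (ζ : ℝ) (hζpos : 0 < ζ) (hζ : deriv (Afun D N σ τ s) ζ = 0)
    (huniq : ∀ z : ℝ, 0 < z → deriv (Afun D N σ τ s) z = 0 → z = ζ) :
    ∀ z : ℝ, z ^ 2 / (4 * D) ≤
      (AfunC D N σ τ s ((ζ : ℂ) - Complex.I * (z : ℂ))).re - Afun D N σ τ s ζ :=
  re_along_contour_ge_general D N σ τ s hN hND hσ hτ hs ζ hζpos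
end
end

section
/- For every real σ with σ < 1 and σ ≠ 0, and every y ∈ ℝ, one has ((1+y²)^{σ/2}·cos(σ·arctan(y)) − 1)/σ ≥ 0. Equivalently, Re((1−iy)^σ) ≥ 1 when σ ∈ (0,1), and Re((1−iy)^σ) ≤ 1 when σ < 0, where (1−iy)^σ is the principal complex power. -/
/-!
Write `1 - iy = √(1+y²) e^{-iθ}` with `θ = arctan y ∈ (-π/2, π/2)`, so that
`Re (1 - iy)^σ = (1+y²)^{σ/2} cos (σθ)`. For `σ ≤ 0` both factors are at most `1`.
For `0 ≤ σ ≤ 1`, Bernoulli's inequality and the concavity of `cos` on `[-π/2, π/2]` give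
`cos θ ^ σ ≤ 1 - σ + σ cos θ ≤ cos (σθ)`, and `cos θ ^ σ = (1+y²)^{-σ/2}`.
-/

open Real

lemma Real.cos_rpow_le_cos_mul_s3 {σ θ : ℝ} (h0 : 0 ≤ σ) (h1 : σ ≤ 1)
    (hθ : θ ∈ Set.Icc (-(π / 2)) (π / 2)) : cos θ ^ σ ≤ cos (σ * θ) := by
  have hbernoulli : cos θ ^ σ ≤ 1 + σ * (cos θ - 1) := by
    simpa using rpow_one_add_le_one_add_mul_self (s := cos θ - 1)
      (by linarith [cos_nonneg_of_mem_Icc hθ]) h0 h1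
  have hconcave : (1 - σ) • cos 0 + σ • cos θ ≤ cos ((1 - σ) • (0 : ℝ) + σ • θ) :=
    strictConcaveOn_cos_Icc.concaveOn.2 ⟨by linarith [pi_pos], by linarith [pi_pos]⟩ hθ
      (by linarith) h0 (by ring)
  simp only [smul_eq_mul, mul_zero, cos_zero, mul_one, zero_add] at hconcave
  linarith

lemma Complex.norm_one_sub_I_mul (y : ℝ) : ‖1 - Complex.I * y‖ = √(1 + y ^ 2) := by
  simp [Complex.norm_def, Complex.normSq_apply, sq]

lemma Complex.arg_one_sub_I_mul (y : ℝ) : Complex.arg (1 - Complex.I * y) = -Real.arctan y := by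
  rw [Complex.arg_of_re_nonneg (by simp), norm_one_sub_I_mul, arctan_eq_arcsin, ← arcsin_neg,
    ← neg_div]
  simp

lemma Complex.re_one_sub_I_mul_cpow (σ y : ℝ) :
    ((1 - Complex.I * y) ^ (σ : ℂ)).re =
      (1 + y ^ 2) ^ (σ / 2) * Real.cos (σ * Real.arctan y) := by
  rw [Complex.cpow_ofReal_re, Complex.norm_one_sub_I_mul, Complex.arg_one_sub_I_mul, sqrt_eq_rpow,
    ← rpow_mul (by positivity), neg_mul, Real.cos_neg, mul_comm (Real.arctan y)]
  ring_nf

lemma one_le_rpow_mul_cos_mul_arctan {σ : ℝ} (h0 : 0 ≤ σ) (h1 : σ ≤ 1) (y : ℝ) :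
    1 ≤ (1 + y ^ 2) ^ (σ / 2) * cos (σ * arctan y) := by
  have hcos : cos (arctan y) ^ σ = ((1 + y ^ 2) ^ (σ / 2))⁻¹ := by
    rw [cos_arctan, one_div, inv_rpow (sqrt_nonneg _), sqrt_eq_rpow,
      ← rpow_mul (by positivity)]
    ring_nf
  have harctan : arctan y ∈ Set.Icc (-(π / 2)) (π / 2) :=
    ⟨(neg_pi_div_two_lt_arctan y).le, (arctan_lt_pi_div_two y).le⟩
  calc 1 = (1 + y ^ 2) ^ (σ / 2) * cos (arctan y) ^ σ := by
        rw [hcos, mul_inv_cancel₀ (by positivity)]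
    _ ≤ (1 + y ^ 2) ^ (σ / 2) * cos (σ * arctan y) := by
        gcongr
        exact cos_rpow_le_cos_mul_s3 h0 h1 harctan

lemma rpow_mul_cos_mul_arctan_le_one {σ : ℝ} (h0 : σ ≤ 0) (y : ℝ) :
    (1 + y ^ 2) ^ (σ / 2) * cos (σ * arctan y) ≤ 1 :=
  (mul_le_of_le_one_right (by positivity) (cos_le_one _)).trans
    (rpow_le_one_of_one_le_of_nonpos (by nlinarith) (by linarith))

theorem f_sigma_nonneg_general (σ : ℝ) (hσ1 : σ < 1) (y : ℝ) :
    0 ≤ ((1 + y ^ 2) ^ (σ / 2) * Real.cos (σ * Real.arctan y) - 1) / σ ∧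
    (0 < σ → 1 ≤ ((1 - Complex.I * (y : ℂ)) ^ (σ : ℂ)).re) ∧
    (σ < 0 → ((1 - Complex.I * (y : ℂ)) ^ (σ : ℂ)).re ≤ 1) := by
  simp only [Complex.re_one_sub_I_mul_cpow]
  refine ⟨?_, fun hσ ↦ one_le_rpow_mul_cos_mul_arctan hσ.le hσ1.le y,
    fun hσ ↦ rpow_mul_cos_mul_arctan_le_one hσ.le y⟩
  rcases le_or_gt σ 0 with hσ | hσ
  · exact div_nonneg_of_nonpos (sub_nonpos.2 (rpow_mul_cos_mul_arctan_le_one hσ y)) hσ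
  · exact div_nonneg (sub_nonneg.2 (one_le_rpow_mul_cos_mul_arctan hσ.le hσ1.le y)) hσ.le

/-- for σ < 1, σ ≠ 0 and y ∈ ℝ,
((1+y²)^{σ/2}·cos(σ·arctan y) − 1)/σ ≥ 0; equivalently Re((1−iy)^σ) ≥ 1 for σ ∈ (0,1)
and Re((1−iy)^σ) ≤ 1 for σ < 0 (principal complex power). -/
theorem f_sigma_nonneg (σ : ℝ) (hσ1 : σ < 1) (hσ0 : σ ≠ 0) (y : ℝ) :
    0 ≤ ((1 + y ^ 2) ^ (σ / 2) * Real.cos (σ * Real.arctan y) - 1) / σ ∧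
    (0 < σ → 1 ≤ ((1 - Complex.I * (y : ℂ)) ^ (σ : ℂ)).re) ∧
    (σ < 0 → ((1 - Complex.I * (y : ℂ)) ^ (σ : ℂ)).re ≤ 1) :=
  f_sigma_nonneg_general σ hσ1 y
end

section
/- For every α ∈ (0,1) and α₀ ∈ (0,1): ∫₀^∞ ∫₀¹ [ (1 − e^{−u·y})/u − (e^{−u·y} − e^{−y})/(1−u) ] · (1−u)^{−α} · y^{−1−α₀} du dy = (Γ(1−α₀)/α₀) · ( 1/α + (1 − α₀/α) · Γ(1−α)·Γ(α₀)/Γ(1+α₀−α) ). -/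
/-!
Write the bracket as `(1/u + 1/(1-u)) (1 - e^{-uy}) - (1 - e^{-y})/(1-u)`. Integrating by parts
against the Gamma integral gives `∫₀^∞ (1 - e^{-cy}) y^{-1-α₀} dy = Γ(1-α₀) c^{α₀} / α₀`, so the
inner `y`-integral is `Γ(1-α₀)/α₀ · (u^{α₀-1} (1-u)^{-α} - (1 - u^{α₀}) (1-u)^{-1-α})`.
The integrand is nonnegative (convexity of `exp`), which justifies integrating in `y` first.
The first term is the Beta integral `B(α₀, 1-α)`; integrating the second by parts returns
`(α₀/α) B(α₀, 1-α)` minus the boundary term `1/α`.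
-/

open Real Set MeasureTheory Filter Topology

theorem tendsto_mul_rpow_neg_of_abs_le {ι : Type*} {l : Filter ι} {f g : ι → ℝ} {s C : ℝ}
    (hs : s < 1) (hf : Tendsto f l (𝓝 0)) (hg : ∀ᶠ x in l, 0 < f x ∧ |g x| ≤ C * f x) :
    Tendsto (fun x => g x * f x ^ (-s)) l (𝓝 0) := by
  have hlim : Tendsto (fun x => C * f x ^ (1 - s)) l (𝓝 0) := by
    simpa [zero_rpow (sub_pos.2 hs).ne'] using
      ((continuousAt_rpow_const 0 (1 - s) (Or.inr (sub_pos.2 hs).le)).tendsto.comp hf).const_mul C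
  refine squeeze_zero_norm' ?_ hlim
  filter_upwards [hg] with x ⟨hfx, hgx⟩
  calc ‖g x * f x ^ (-s)‖ = |g x| * f x ^ (-s) := by
        rw [norm_mul, Real.norm_eq_abs, Real.norm_eq_abs, abs_of_nonneg (rpow_nonneg hfx.le _)]
    _ ≤ C * f x * f x ^ (-s) := by gcongr
    _ = C * f x ^ (1 - s) := by rw [mul_assoc, sub_eq_add_neg, rpow_add hfx, rpow_one]

section OneSubExp

variable {s c : ℝ}

theorem one_sub_exp_neg_mem_Icc {x : ℝ} (hx : 0 ≤ x) : 1 - exp (-x) ∈ Icc 0 x :=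
  ⟨by linarith [exp_le_one_iff.2 (neg_nonpos.2 hx)], by linarith [one_sub_le_exp_neg x]⟩

theorem integrableOn_one_sub_exp_neg_mul_mul_rpow (hs0 : 0 < s) (hs1 : s < 1) (hc : 0 ≤ c) :
    IntegrableOn (fun y => (1 - exp (-(c * y))) * y ^ (-1 - s)) (Ioi 0) := by
  have hmeas : AEStronglyMeasurable (fun y => (1 - exp (-(c * y))) * y ^ (-1 - s)) :=
    (by fun_prop : Measurable _).aestronglyMeasurable
  rw [← Ioc_union_Ioi_eq_Ioi zero_le_one]
  refine IntegrableOn.union ?_ ?_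
  · refine (((intervalIntegral.intervalIntegrable_rpow' (a := 0) (b := 1) (r := -s)
      (by linarith)).1).const_mul c).mono' hmeas.restrict ?_
    filter_upwards [ae_restrict_mem measurableSet_Ioc] with y hy
    obtain ⟨h0, h1⟩ := one_sub_exp_neg_mem_Icc (mul_nonneg hc hy.1.le)
    rw [Real.norm_of_nonneg (mul_nonneg h0 (rpow_nonneg hy.1.le _))]
    calc (1 - exp (-(c * y))) * y ^ (-1 - s) ≤ c * y * y ^ (-1 - s) :=
          mul_le_mul_of_nonneg_right h1 (rpow_nonneg hy.1.le _)
      _ = c * y ^ (-s) := by rw [show -s = 1 + (-1 - s) by ring, rpow_add hy.1, rpow_one, mul_assoc]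
  · refine (integrableOn_Ioi_rpow_of_lt (by linarith : -1 - s < -1) one_pos).mono'
      hmeas.restrict ?_
    filter_upwards [ae_restrict_mem measurableSet_Ioi] with y (hy : 1 < y)
    obtain ⟨h0, -⟩ := one_sub_exp_neg_mem_Icc (mul_nonneg hc (by linarith : (0:ℝ) ≤ y))
    rw [Real.norm_of_nonneg (by positivity)]
    exact mul_le_of_le_one_left (by positivity) (by linarith [exp_pos (-(c * y))])

theorem integral_one_sub_exp_neg_mul_mul_rpow (hs0 : 0 < s) (hs1 : s < 1) (hc : 0 < c) :
    ∫ y in Ioi 0, (1 - exp (-(c * y))) * y ^ (-1 - s) = Gamma (1 - s) / s * c ^ s := by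
  set F : ℝ → ℝ := fun y => -(1 / s) * ((1 - exp (-(c * y))) * y ^ (-s))
  have hF0 : F 0 = 0 := by simp [F]
  have hderiv : ∀ y ∈ Ioi (0 : ℝ), HasDerivAt F ((1 - exp (-(c * y))) * y ^ (-1 - s)
      - c / s * (y ^ (1 - s - 1) * exp (-(c * y)))) y := by
    intro y (hy : 0 < y)
    have h1 : HasDerivAt (fun y => 1 - exp (-(c * y))) (exp (-(c * y)) * c) y := by
      simpa using (((hasDerivAt_id y).const_mul c).neg.exp).const_sub 1
    refine ((h1.mul (hasDerivAt_rpow_const (p := -s) (Or.inl hy.ne'))).const_mul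
      (-(1 / s))).congr_deriv ?_
    rw [show -s - 1 = -1 - s by ring, show 1 - s - 1 = -s by ring]
    field_simp
    ring
  have hcont : ContinuousWithinAt F (Ici 0) 0 := by
    refine continuousWithinAt_Ioi_iff_Ici.1 ?_
    rw [ContinuousWithinAt, hF0]
    suffices h : Tendsto (fun y => (1 - exp (-(c * y))) * y ^ (-s)) (𝓝[>] 0) (𝓝 0) by
      simpa [F] using h.const_mul (-(1 / s))
    refine tendsto_mul_rpow_neg_of_abs_le (f := fun y => y) (C := c) hs1
      (tendsto_id.mono_left nhdsWithin_le_nhds) ?_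
    filter_upwards [self_mem_nhdsWithin] with y (hy : 0 < y)
    obtain ⟨h0, h1⟩ := one_sub_exp_neg_mem_Icc (mul_nonneg hc.le hy.le)
    exact ⟨hy, by rwa [abs_of_nonneg h0]⟩
  have hlim : Tendsto F atTop (𝓝 0) := by
    have h1 : Tendsto (fun y => 1 - exp (-(c * y))) atTop (𝓝 (1 - 0)) :=
      (tendsto_exp_neg_atTop_nhds_zero.comp (tendsto_id.const_mul_atTop hc)).const_sub 1
    simpa [F] using ((h1.mul (tendsto_rpow_neg_atTop hs0)).const_mul (-(1 / s)))
  have hexp : IntegrableOn (fun y => y ^ (1 - s - 1) * exp (-(c * y))) (Ioi 0) := by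
    refine (integrableOn_rpow_mul_exp_neg_mul_rpow (s := 1 - s - 1) (by linarith) one_pos
      hc).congr_fun (fun y _ => by simp) measurableSet_Ioi
  have := integral_Ioi_of_hasDerivAt_of_tendsto hcont hderiv
    ((integrableOn_one_sub_exp_neg_mul_mul_rpow hs0 hs1 hc.le).sub (hexp.const_mul _)) hlim
  rw [integral_sub (integrableOn_one_sub_exp_neg_mul_mul_rpow hs0 hs1 hc.le) (hexp.const_mul _),
    integral_const_mul, integral_rpow_mul_exp_neg_mul_Ioi (by linarith) hc] at this
  rw [hF0, one_div, inv_rpow hc.le, rpow_sub hc, rpow_one] at this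
  field_simp at this ⊢
  linarith

end OneSubExp

section Beta

variable {a b : ℝ}

theorem ofReal_rpow_mul_one_sub_rpow {x : ℝ} (hx : x ∈ Icc 0 1) :
    ((x ^ (a - 1) * (1 - x) ^ (b - 1) : ℝ) : ℂ) =
      (x : ℂ) ^ ((a : ℂ) - 1) * (1 - (x : ℂ)) ^ ((b : ℂ) - 1) := by
  push_cast
  rw [Complex.ofReal_cpow hx.1, Complex.ofReal_cpow (sub_nonneg.2 hx.2)]
  push_cast
  rfl

theorem integrableOn_rpow_mul_one_sub_rpow (ha : 0 < a) (hb : 0 < b) :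
    IntegrableOn (fun x : ℝ => x ^ (a - 1) * (1 - x) ^ (b - 1)) (Ioo 0 1) := by
  have hC : IntegrableOn (fun x : ℝ =>
      ((x : ℂ) ^ ((a : ℂ) - 1) * (1 - (x : ℂ)) ^ ((b : ℂ) - 1)).re) (Ioc 0 1) :=
    (Complex.betaIntegral_convergent (u := a) (v := b) (by simpa) (by simpa)).1.re
  refine (hC.congr_fun (fun x hx => ?_) measurableSet_Ioc).mono_set Ioo_subset_Ioc_self
  rw [← ofReal_rpow_mul_one_sub_rpow ⟨hx.1.le, hx.2⟩, Complex.ofReal_re]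

theorem integral_rpow_mul_one_sub_rpow (ha : 0 < a) (hb : 0 < b) :
    ∫ x in Ioo 0 1, x ^ (a - 1) * (1 - x) ^ (b - 1) = Gamma a * Gamma b / Gamma (a + b) := by
  have hβ : Complex.betaIntegral a b =
      ((∫ x in Ioo 0 1, x ^ (a - 1) * (1 - x) ^ (b - 1) : ℝ) : ℂ) := by
    rw [Complex.betaIntegral, intervalIntegral.integral_of_le zero_le_one,
      integral_Ioc_eq_integral_Ioo]
    refine (setIntegral_congr_fun measurableSet_Ioo (fun x hx => ?_)).trans integral_ofReal
    exact (ofReal_rpow_mul_one_sub_rpow ⟨hx.1.le, hx.2.le⟩).symm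
  have h := Complex.Gamma_mul_Gamma_eq_betaIntegral (s := a) (t := b) (by simpa) (by simpa)
  rw [hβ, ← Complex.ofReal_add, Complex.Gamma_ofReal, Complex.Gamma_ofReal,
    Complex.Gamma_ofReal] at h
  rw [eq_div_iff (Gamma_pos_of_pos (add_pos ha hb)).ne']
  exact_mod_cast (h.trans (mul_comm _ _)).symm

end Beta

section OneSubRpow

variable {a α : ℝ}

theorem one_sub_rpow_mem_Icc {u : ℝ} (hu0 : 0 ≤ u) (hu1 : u ≤ 1) (ha0 : 0 ≤ a) (ha1 : a ≤ 1) :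
    1 - u ^ a ∈ Icc 0 (1 - u) :=
  ⟨sub_nonneg.2 (rpow_le_one hu0 hu1 ha0), by linarith [self_le_rpow_of_le_one hu0 hu1 ha1]⟩

theorem integrableOn_one_sub_rpow_mul_one_sub_rpow (ha0 : 0 ≤ a) (ha1 : a ≤ 1) (hα : α < 1) :
    IntegrableOn (fun u : ℝ => (1 - u ^ a) * (1 - u) ^ (-1 - α)) (Ioo 0 1) := by
  have hdom : IntegrableOn (fun u : ℝ => (1 - u) ^ (-α)) (Ioo 0 1) := by
    simpa using integrableOn_rpow_mul_one_sub_rpow one_pos (sub_pos.2 hα)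
  refine hdom.mono' (by fun_prop : Measurable _).aestronglyMeasurable ?_
  filter_upwards [ae_restrict_mem measurableSet_Ioo] with u hu
  obtain ⟨h0, h1⟩ := one_sub_rpow_mem_Icc hu.1.le hu.2.le ha0 ha1
  have hu1 : 0 < 1 - u := sub_pos.2 hu.2
  rw [Real.norm_of_nonneg (mul_nonneg h0 (rpow_nonneg hu1.le _))]
  calc (1 - u ^ a) * (1 - u) ^ (-1 - α) ≤ (1 - u) * (1 - u) ^ (-1 - α) :=
        mul_le_mul_of_nonneg_right h1 (rpow_nonneg hu1.le _)
    _ = (1 - u) ^ (-α) := by rw [show -α = 1 + (-1 - α) by ring, rpow_add hu1, rpow_one]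

theorem integral_one_sub_rpow_mul_one_sub_rpow (ha0 : 0 < a) (ha1 : a ≤ 1) (hα0 : 0 < α)
    (hα1 : α < 1) :
    ∫ u in Ioo 0 1, (1 - u ^ a) * (1 - u) ^ (-1 - α) =
      a / α * (∫ u in Ioo 0 1, u ^ (a - 1) * (1 - u) ^ (-α)) - 1 / α := by
  set F : ℝ → ℝ := fun u => -(1 / α) * ((1 - u ^ a) * (1 - u) ^ (-α))
  have hderiv : ∀ u ∈ Ioo (0 : ℝ) 1, HasDerivAt F
      (a / α * (u ^ (a - 1) * (1 - u) ^ (-α)) - (1 - u ^ a) * (1 - u) ^ (-1 - α)) u := by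
    intro u hu
    have h1 := (hasDerivAt_rpow_const (p := a) (Or.inl hu.1.ne')).const_sub 1
    have h2 := ((hasDerivAt_id' u).const_sub 1).rpow_const (p := -α)
      (Or.inl (sub_pos.2 hu.2).ne')
    refine ((h1.mul h2).const_mul (-(1 / α))).congr_deriv ?_
    rw [show -α - 1 = -1 - α by ring]
    field_simp
    ring
  have hB : IntegrableOn (fun u : ℝ => u ^ (a - 1) * (1 - u) ^ (-α)) (Ioo 0 1) := by
    simpa using integrableOn_rpow_mul_one_sub_rpow ha0 (sub_pos.2 hα1)
  have hJ := integrableOn_one_sub_rpow_mul_one_sub_rpow ha0.le ha1 hα1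
  have hint := (intervalIntegrable_iff_integrableOn_Ioo_of_le zero_le_one).2
    ((hB.const_mul (a / α)).sub hJ)
  have hlim0 : Tendsto F (𝓝[>] 0) (𝓝 (-(1 / α))) := by
    have : ContinuousAt F 0 := by
      fun_prop (disch := first | positivity | norm_num)
    simpa [F, zero_rpow ha0.ne'] using this.tendsto.mono_left nhdsWithin_le_nhds
  have hlim1 : Tendsto F (𝓝[<] 1) (𝓝 0) := by
    suffices h : Tendsto (fun u : ℝ => (1 - u ^ a) * (1 - u) ^ (-α)) (𝓝[<] 1) (𝓝 0) by
      simpa [F] using h.const_mul (-(1 / α))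
    refine tendsto_mul_rpow_neg_of_abs_le (C := 1) hα1 ?_ ?_
    · exact ((continuous_const.sub continuous_id).tendsto' 1 0 (sub_self 1)).mono_left
        nhdsWithin_le_nhds
    · filter_upwards [Ioo_mem_nhdsLT zero_lt_one] with u hu
      obtain ⟨h0, h1⟩ := one_sub_rpow_mem_Icc hu.1.le hu.2.le ha0.le ha1
      exact ⟨sub_pos.2 hu.2, by rwa [abs_of_nonneg h0, one_mul]⟩
  have := intervalIntegral.integral_eq_sub_of_hasDerivAt_of_tendsto zero_lt_one hderiv hint
    hlim0 hlim1
  rw [intervalIntegral.integral_of_le zero_le_one, integral_Ioc_eq_integral_Ioo,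
    integral_sub (hB.const_mul _) hJ, integral_const_mul] at this
  linarith

end OneSubRpow

theorem integral_integral_swap_of_nonneg {X Y : Type*} [MeasurableSpace X] [MeasurableSpace Y]
    {μ : Measure X} {ν : Measure Y} [SFinite μ] [SFinite ν] {f : X → Y → ℝ}
    (hf : AEStronglyMeasurable (Function.uncurry f) (μ.prod ν)) (hf0 : ∀ᵐ x ∂μ, 0 ≤ᵐ[ν] f x)
    (hfx : ∀ᵐ x ∂μ, Integrable (f x) ν) (hF : Integrable (fun x => ∫ y, f x y ∂ν) μ) :
    ∫ y, ∫ x, f x y ∂μ ∂ν = ∫ x, ∫ y, f x y ∂ν ∂μ := by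
  refine (integral_integral_swap ((integrable_prod_iff hf).2 ⟨hfx, hF.congr ?_⟩)).symm
  filter_upwards [hf0] with x hx
  exact integral_congr_ae (hx.mono fun y hy => (Real.norm_of_nonneg hy).symm)

theorem exp_neg_mul_le {u : ℝ} (hu0 : 0 ≤ u) (hu1 : u ≤ 1) (y : ℝ) :
    exp (-(u * y)) ≤ u * exp (-y) + (1 - u) := by
  simpa using convexOn_exp.2 (mem_univ (-y)) (mem_univ 0) hu0 (sub_nonneg.2 hu1)
    (add_sub_cancel u 1)

noncomputable def scoreIntegrand (α α₀ u y : ℝ) : ℝ :=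
  ((1 - exp (-(u * y))) / u - (exp (-(u * y)) - exp (-y)) / (1 - u)) *
    (1 - u) ^ (-α) * y ^ (-1 - α₀)

section ScoreIntegrand

variable {α α₀ u : ℝ}

theorem measurable_scoreIntegrand : Measurable (Function.uncurry (scoreIntegrand α α₀)) := by
  unfold scoreIntegrand
  fun_prop

theorem scoreIntegrand_nonneg (hu0 : 0 < u) (hu1 : u < 1) {y : ℝ} (hy : 0 ≤ y) :
    0 ≤ scoreIntegrand α α₀ u y := by
  have hbracket : 0 ≤ (1 - exp (-(u * y))) / u - (exp (-(u * y)) - exp (-y)) / (1 - u) := by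
    rw [div_sub_div _ _ hu0.ne' (sub_pos.2 hu1).ne']
    have := exp_neg_mul_le hu0.le hu1.le y
    exact div_nonneg (by nlinarith) (mul_nonneg hu0.le (sub_pos.2 hu1).le)
  exact mul_nonneg (mul_nonneg hbracket (rpow_nonneg (sub_pos.2 hu1).le _)) (rpow_nonneg hy _)

theorem scoreIntegrand_eq (hu0 : 0 < u) (hu1 : u < 1) (y : ℝ) :
    scoreIntegrand α α₀ u y =
      (1 - u) ^ (-α) * (1 / u + 1 / (1 - u)) * ((1 - exp (-(u * y))) * y ^ (-1 - α₀)) -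
        (1 - u) ^ (-α) / (1 - u) * ((1 - exp (-y)) * y ^ (-1 - α₀)) := by
  have := (sub_pos.2 hu1).ne'
  unfold scoreIntegrand
  field_simp
  ring

theorem integrableOn_scoreIntegrand (h₀0 : 0 < α₀) (h₀1 : α₀ < 1) (hu0 : 0 < u) (hu1 : u < 1) :
    IntegrableOn (scoreIntegrand α α₀ u) (Ioi 0) := by
  have hφu := integrableOn_one_sub_exp_neg_mul_mul_rpow h₀0 h₀1 hu0.le
  have hφ1 := integrableOn_one_sub_exp_neg_mul_mul_rpow h₀0 h₀1 zero_le_one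
  simp only [one_mul] at hφ1
  exact IntegrableOn.congr_fun ((hφu.const_mul _).sub (hφ1.const_mul _))
    (fun y _ => (scoreIntegrand_eq hu0 hu1 y).symm) measurableSet_Ioi

theorem integral_scoreIntegrand (h₀0 : 0 < α₀) (h₀1 : α₀ < 1) (hu0 : 0 < u) (hu1 : u < 1) :
    ∫ y in Ioi 0, scoreIntegrand α α₀ u y =
      Gamma (1 - α₀) / α₀ *
        (u ^ (α₀ - 1) * (1 - u) ^ (-α) - (1 - u ^ α₀) * (1 - u) ^ (-1 - α)) := by
  have hφu := integrableOn_one_sub_exp_neg_mul_mul_rpow h₀0 h₀1 hu0.le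
  have hφ1 := integrableOn_one_sub_exp_neg_mul_mul_rpow h₀0 h₀1 zero_le_one
  have hIu := integral_one_sub_exp_neg_mul_mul_rpow h₀0 h₀1 hu0
  have hI1 := integral_one_sub_exp_neg_mul_mul_rpow h₀0 h₀1 one_pos
  simp only [one_mul, one_rpow, mul_one] at hφ1 hI1
  rw [setIntegral_congr_fun measurableSet_Ioi (fun y _ => scoreIntegrand_eq hu0 hu1 y),
    integral_sub (hφu.const_mul _) (hφ1.const_mul _), integral_const_mul, integral_const_mul,
    hIu, hI1, rpow_sub_one hu0.ne', show -1 - α = -α - 1 by ring,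
    rpow_sub_one (sub_pos.2 hu1).ne']
  field_simp
  ring

end ScoreIntegrand

/-- the explicit double-integral evaluation from the computation of
E[U_t(α)+V_t(α)] for the Karlin–Rouault score statistic. -/
theorem double_integral_KR_score (α α₀ : ℝ) (hα : α ∈ Set.Ioo (0 : ℝ) 1)
    (hα₀ : α₀ ∈ Set.Ioo (0 : ℝ) 1) :
    (∫ y in Set.Ioi (0 : ℝ), ∫ u in Set.Ioo (0 : ℝ) 1,
        ((1 - Real.exp (-(u * y))) / u - (Real.exp (-(u * y)) - Real.exp (-y)) / (1 - u)) *
          (1 - u) ^ (-α) * y ^ (-1 - α₀)) =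
      Real.Gamma (1 - α₀) / α₀ *
        (1 / α + (1 - α₀ / α) * (Real.Gamma (1 - α) * Real.Gamma α₀ /
          Real.Gamma (1 + α₀ - α))) := by
  obtain ⟨hα0, hα1⟩ := hα
  obtain ⟨h₀0, h₀1⟩ := hα₀
  have hB : IntegrableOn (fun u : ℝ => u ^ (α₀ - 1) * (1 - u) ^ (-α)) (Ioo 0 1) := by
    simpa using integrableOn_rpow_mul_one_sub_rpow h₀0 (sub_pos.2 hα1)
  have hBval : ∫ u in Ioo 0 1, u ^ (α₀ - 1) * (1 - u) ^ (-α) =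
      Gamma α₀ * Gamma (1 - α) / Gamma (1 + α₀ - α) := by
    rw [show 1 + α₀ - α = α₀ + (1 - α) by ring]
    simpa using integral_rpow_mul_one_sub_rpow h₀0 (sub_pos.2 hα1)
  have hJ := integrableOn_one_sub_rpow_mul_one_sub_rpow h₀0.le h₀1.le hα1
  have hslice : EqOn (fun u => ∫ y in Ioi 0, scoreIntegrand α α₀ u y) (fun u =>
      Gamma (1 - α₀) / α₀ * (u ^ (α₀ - 1) * (1 - u) ^ (-α) - (1 - u ^ α₀) * (1 - u) ^ (-1 - α)))
      (Ioo 0 1) := fun u hu => integral_scoreIntegrand h₀0 h₀1 hu.1 hu.2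
  change ∫ y in Ioi 0, ∫ u in Ioo 0 1, scoreIntegrand α α₀ u y = _
  rw [integral_integral_swap_of_nonneg measurable_scoreIntegrand.aestronglyMeasurable ?_ ?_
      (IntegrableOn.congr_fun ((hB.sub hJ).const_mul _) hslice.symm measurableSet_Ioo),
    setIntegral_congr_fun measurableSet_Ioo hslice, integral_const_mul, integral_sub hB hJ,
    integral_one_sub_rpow_mul_one_sub_rpow h₀0 h₀1.le hα0 hα1, hBval]
  · field_simp
    ring
  · filter_upwards [ae_restrict_mem measurableSet_Ioo] with u hu
    filter_upwards [ae_restrict_mem measurableSet_Ioi] with y hy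
    exact scoreIntegrand_nonneg hu.1 hu.2 hy.out.le
  · filter_upwards [ae_restrict_mem measurableSet_Ioo] with u hu
    exact integrableOn_scoreIntegrand h₀0 h₀1 hu.1 hu.2
end

section
/- Let (f_j)_{j≥1} be a probability mass function on the positive integers such that f₁ < 1 and 1 − ∑_{k=1}^{j} f_k ∼ L·j^{−α₁} as j → ∞, for some α₁ ∈ (0,1) and L > 0. Then the equation ∑_{j≥1} f_j ∑_{k=1}^{j−1} α/(k−α) = 1 has a unique solution α₀ in (0,1). -/
/-!
Write `F(α) = ∑ f_j ∑_{k=1}^{j-1} α / (k - α)`. Termwise `α / (k - α) ≤ α / (1 - α) · k⁻¹`,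
and by Tonelli `∑_j f_j ∑_{k<j} k⁻¹ = ∑_k T_k / k` with `T_k = 1 - ∑_{i ≤ k} f_i = O(k^{-α₁})`,
so `F` is finite and continuous on `[0, 1)`. It vanishes at `0`, is strictly increasing because
some `f_j` with `j ≥ 2` is positive, and is at least `f_j α / (1 - α)`, which is unbounded; the
intermediate value theorem then gives exactly one solution of `F(α) = 1`.
-/

open Filter Asymptotics Finset

lemma div_sub_strictMonoOn {c : ℝ} (hc : 0 < c) :
    StrictMonoOn (fun x : ℝ => x / (c - x)) (Set.Iio c) := by
  intro x hx y hy hxy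
  rw [div_lt_div_iff₀ (sub_pos.2 hx) (sub_pos.2 hy)]
  nlinarith

lemma div_sub_le_div_one_sub_mul_inv {c x : ℝ} (hc : 1 ≤ c) (hx0 : 0 ≤ x) (hx1 : x < 1) :
    x / (c - x) ≤ x / (1 - x) * c⁻¹ := by
  rw [← div_eq_mul_inv, div_div, div_le_div_iff₀ (by linarith) (by nlinarith)]
  nlinarith [mul_nonneg (mul_nonneg hx0 hx0) (sub_nonneg.2 hc)]

noncomputable def innerSum (x : ℝ) (j : ℕ) : ℝ :=
  ∑ k ∈ Icc 1 (j - 1), x / ((k : ℝ) - x)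

section InnerSum

variable {x : ℝ} {j : ℕ}

lemma one_le_cast_of_mem_Icc {k m : ℕ} (hk : k ∈ Icc 1 m) : (1 : ℝ) ≤ k := by
  exact_mod_cast (mem_Icc.1 hk).1

@[simp]
lemma innerSum_zero_left (j : ℕ) : innerSum 0 j = 0 := by
  simp [innerSum]

lemma innerSum_nonneg (hx0 : 0 ≤ x) (hx1 : x < 1) : 0 ≤ innerSum x j :=
  sum_nonneg fun k hk => div_nonneg hx0 (by linarith [one_le_cast_of_mem_Icc hk])

lemma innerSum_le (hx0 : 0 ≤ x) (hx1 : x < 1) :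
    innerSum x j ≤ x / (1 - x) * ∑ k ∈ Icc 1 (j - 1), (k : ℝ)⁻¹ := by
  rw [mul_sum]
  exact sum_le_sum fun k hk => div_sub_le_div_one_sub_mul_inv (one_le_cast_of_mem_Icc hk) hx0 hx1

lemma div_one_sub_le_innerSum (hj : 2 ≤ j) (hx0 : 0 ≤ x) (hx1 : x < 1) :
    x / (1 - x) ≤ innerSum x j := by
  have h1 : 1 ∈ Icc 1 (j - 1) := mem_Icc.2 ⟨le_rfl, by omega⟩
  simpa [innerSum] using single_le_sum (f := fun k : ℕ => x / ((k : ℝ) - x))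
    (fun k hk => div_nonneg hx0 (by linarith [one_le_cast_of_mem_Icc hk])) h1

lemma innerSum_monotoneOn (j : ℕ) : MonotoneOn (innerSum · j) (Set.Iio 1) := by
  intro x hx y hy hxy
  refine sum_le_sum fun k hk => ?_
  have hk := one_le_cast_of_mem_Icc hk
  exact (div_sub_strictMonoOn (by linarith)).monotoneOn (Set.Iio_subset_Iio hk hx)
    (Set.Iio_subset_Iio hk hy) hxy

lemma innerSum_strictMonoOn (hj : 2 ≤ j) : StrictMonoOn (innerSum · j) (Set.Iio 1) := by
  intro x hx y hy hxy
  refine sum_lt_sum_of_nonempty (nonempty_Icc.2 (by omega)) fun k hk => ?_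
  have hk := one_le_cast_of_mem_Icc hk
  exact div_sub_strictMonoOn (by linarith) (Set.Iio_subset_Iio hk hx)
    (Set.Iio_subset_Iio hk hy) hxy

lemma continuousOn_innerSum (j : ℕ) : ContinuousOn (innerSum · j) (Set.Iio 1) :=
  continuousOn_finsetSum _ fun k hk => continuousOn_id.div (continuousOn_const.sub continuousOn_id)
    fun x hx => by linarith [one_le_cast_of_mem_Icc hk, Set.mem_Iio.1 hx]

end InnerSum

/-- `weightedSeries f α - 1` is the paper's `F*(α)`. -/
noncomputable def weightedSeries (f : ℕ → ℝ) (x : ℝ) : ℝ :=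
  ∑' j, f j * innerSum x j

@[simp]
lemma weightedSeries_zero (f : ℕ → ℝ) : weightedSeries f 0 = 0 := by
  simp [weightedSeries]

section WeightedSeries

variable {f : ℕ → ℝ}

lemma mul_innerSum_le (hf : ∀ j, 0 ≤ f j) {x : ℝ} (hx : x ∈ Set.Ico 0 1) (j : ℕ) :
    f j * innerSum x j ≤ x / (1 - x) * (f j * ∑ k ∈ Icc 1 (j - 1), (k : ℝ)⁻¹) := by
  rw [mul_left_comm]
  exact mul_le_mul_of_nonneg_left (innerSum_le hx.1 hx.2) (hf j)

lemma summable_mul_innerSum (hf : ∀ j, 0 ≤ f j)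
    (hu : Summable fun j => f j * ∑ k ∈ Icc 1 (j - 1), (k : ℝ)⁻¹) {x : ℝ}
    (hx : x ∈ Set.Ico 0 1) : Summable fun j => f j * innerSum x j :=
  (hu.mul_left _).of_nonneg_of_le (fun j => mul_nonneg (hf j) (innerSum_nonneg hx.1 hx.2))
    (mul_innerSum_le hf hx)

lemma weightedSeries_strictMonoOn (hf : ∀ j, 0 ≤ f j)
    (hu : Summable fun j => f j * ∑ k ∈ Icc 1 (j - 1), (k : ℝ)⁻¹) {j : ℕ} (hj : 2 ≤ j)
    (hfj : 0 < f j) : StrictMonoOn (weightedSeries f) (Set.Ico 0 1) := by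
  intro x hx y hy hxy
  refine (summable_mul_innerSum hf hu hx).tsum_lt_tsum (i := j) (fun i => ?_) ?_
    (summable_mul_innerSum hf hu hy)
  · exact mul_le_mul_of_nonneg_left (innerSum_monotoneOn i hx.2 hy.2 hxy.le) (hf i)
  · exact mul_lt_mul_of_pos_left (innerSum_strictMonoOn hj hx.2 hy.2 hxy) hfj

lemma continuousOn_weightedSeries (hf : ∀ j, 0 ≤ f j)
    (hu : Summable fun j => f j * ∑ k ∈ Icc 1 (j - 1), (k : ℝ)⁻¹) {b : ℝ} (hb : b < 1) :
    ContinuousOn (weightedSeries f) (Set.Icc 0 b) := by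
  refine continuousOn_tsum (fun j => ((continuousOn_innerSum j).mono
    fun x hx => hb.trans_le' hx.2).const_smul (f j)) (hu.mul_left (b / (1 - b)))
    fun j x hx => ?_
  have hx' : x ∈ Set.Ico 0 1 := ⟨hx.1, hx.2.trans_lt hb⟩
  rw [Real.norm_of_nonneg (mul_nonneg (hf j) (innerSum_nonneg hx'.1 hx'.2))]
  refine (mul_innerSum_le hf hx' j).trans (mul_le_mul_of_nonneg_right ?_ ?_)
  · exact (div_sub_strictMonoOn one_pos).monotoneOn hx'.2 hb hx.2
  · exact mul_nonneg (hf j) (sum_nonneg fun k _ => by positivity)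

lemma mul_div_one_sub_le_weightedSeries (hf : ∀ j, 0 ≤ f j)
    (hu : Summable fun j => f j * ∑ k ∈ Icc 1 (j - 1), (k : ℝ)⁻¹) {j : ℕ} (hj : 2 ≤ j)
    {x : ℝ} (hx : x ∈ Set.Ico 0 1) : f j * (x / (1 - x)) ≤ weightedSeries f x :=
  (mul_le_mul_of_nonneg_left (div_one_sub_le_innerSum hj hx.1 hx.2) (hf j)).trans
    ((summable_mul_innerSum hf hu hx).le_tsum j fun i _ =>
      mul_nonneg (hf i) (innerSum_nonneg hx.1 hx.2))

/-- The root is bracketed by `0` and `c / (f j + c)`, where `f j * x / (1 - x)` reaches `c`. -/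
lemma existsUnique_weightedSeries_eq (hf : ∀ j, 0 ≤ f j)
    (hu : Summable fun j => f j * ∑ k ∈ Icc 1 (j - 1), (k : ℝ)⁻¹) {j : ℕ} (hj : 2 ≤ j)
    (hfj : 0 < f j) {c : ℝ} (hc : 0 < c) :
    ∃! x : ℝ, x ∈ Set.Ioo 0 1 ∧ weightedSeries f x = c := by
  set b := c / (f j + c)
  have hb : b ∈ Set.Ico 0 1 := ⟨by positivity, (div_lt_one (by positivity)).2 (by linarith)⟩
  have hcb : c ≤ weightedSeries f b := by
    have h1b : 1 - b = f j / (f j + c) := by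
      simp only [b]
      field_simp
      ring
    have : f j * (b / (1 - b)) = c := by
      rw [h1b, div_div_div_cancel_right₀ (by positivity), mul_div_cancel₀ _ hfj.ne']
    exact this ▸ mul_div_one_sub_le_weightedSeries hf hu hj hb
  obtain ⟨x, hx, hfx⟩ := intermediate_value_Icc hb.1 (continuousOn_weightedSeries hf hu hb.2)
    ⟨(weightedSeries_zero f).trans_le hc.le, hcb⟩
  have hx0 : x ≠ 0 := by
    rintro rfl
    simp [hc.ne] at hfx
  refine ⟨x, ⟨⟨lt_of_le_of_ne hx.1 (Ne.symm hx0), hx.2.trans_lt hb.2⟩, hfx⟩, ?_⟩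
  rintro y ⟨hy, hfy⟩
  exact (weightedSeries_strictMonoOn hf hu hj hfj).injOn (Set.Ioo_subset_Ico_self hy)
    ⟨hx.1, hx.2.trans_lt hb.2⟩ (hfy.trans hfx.symm)

end WeightedSeries

section Tail

variable {f : ℕ → ℝ}

lemma tsum_ite_lt_eq_tsum_sub (hs : Summable f) (hf0 : f 0 = 0) (k : ℕ) :
    ∑' j, (if k < j then f j else 0) = ∑' j, f j - ∑ j ∈ Icc 1 k, f j := by
  have hsplit : ∀ j, (if k < j then f j else 0) = f j - if j ∈ Icc 1 k then f j else 0 := by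
    intro j
    rcases Nat.eq_zero_or_pos j with rfl | hj
    · simp [hf0]
    · have hmem : j ∈ Icc 1 k ↔ ¬ k < j := by rw [mem_Icc]; omega
      by_cases hkj : k < j <;> simp [hkj, hmem]
  have hfin : ∀ j ∉ Icc 1 k, (if j ∈ Icc 1 k then f j else 0) = 0 := fun j hj => if_neg hj
  simp_rw [hsplit]
  rw [hs.tsum_sub (summable_of_ne_finset_zero hfin), tsum_eq_sum hfin, sum_ite_mem, inter_self]

/-- Summing `f j / k` over `1 ≤ k < j` first in `j` gives the tail sums. -/
lemma summable_mul_sum_inv_of_summable_tail (hf : ∀ j, 0 ≤ f j) (hs : Summable f)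
    (hT : Summable fun k : ℕ => (∑' j, if k < j then f j else 0) * (k : ℝ)⁻¹) :
    Summable fun j => f j * ∑ k ∈ Icc 1 (j - 1), (k : ℝ)⁻¹ := by
  -- the pair `(k, j)` carries `f j / k`; for `k = 0` this is `0` since `0⁻¹ = 0`
  set G : ℕ × ℕ → ℝ := fun p => if p.1 < p.2 then f p.2 * (p.1 : ℝ)⁻¹ else 0
  have hG : 0 ≤ G := fun p => by
    simp only [G]
    split_ifs
    exacts [mul_nonneg (hf _) (by positivity), le_rfl]
  have hGk (k : ℕ) : ∑' j, G (k, j) = (∑' j, if k < j then f j else 0) * (k : ℝ)⁻¹ := by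
    rw [← tsum_mul_right]
    simp only [G, ite_mul, zero_mul]
  have hGsum : Summable G := (summable_prod_of_nonneg hG).2
    ⟨fun k => (hs.mul_right (k : ℝ)⁻¹).of_nonneg_of_le (fun j => hG (k, j))
      fun j => by
        simp only [G]
        split_ifs
        exacts [le_rfl, mul_nonneg (hf j) (by positivity)],
    by simpa only [hGk] using hT⟩
  refine hGsum.prod_symm.prod.congr fun j => ?_
  have hsupp : ∀ k ∉ Icc 1 (j - 1), G (k, j) = 0 := by
    intro k hk
    rcases Nat.eq_zero_or_pos k with rfl | hk0
    · simp [G]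
    · simp only [G, if_neg (show ¬ k < j by rw [mem_Icc] at hk; omega)]
  change ∑' k, G (k, j) = _
  rw [tsum_eq_sum hsupp, mul_sum]
  exact sum_congr rfl fun k hk => if_pos (by rw [mem_Icc] at hk; omega)

lemma summable_mul_inv_of_isBigO_rpow {T : ℕ → ℝ} {a : ℝ} (ha : 0 < a)
    (hT : T =O[atTop] fun n => (n : ℝ) ^ (-a)) : Summable fun n => T n * (n : ℝ)⁻¹ := by
  refine summable_of_isBigO_nat (Real.summable_nat_rpow.2 (by linarith : -a - 1 < -1))
    ((hT.mul (isBigO_refl _ _)).trans_eventuallyEq ?_)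
  filter_upwards [eventually_gt_atTop 0] with n hn
  rw [Real.rpow_sub (by exact_mod_cast hn), Real.rpow_one, div_eq_mul_inv]

end Tail

lemma exists_two_le_and_pos {f : ℕ → ℝ} (hf : ∀ j, 0 ≤ f j) (hf0 : f 0 = 0)
    (hsum : ∑' j, f j = 1) (hf1 : f 1 < 1) : ∃ j, 2 ≤ j ∧ 0 < f j := by
  by_contra! h
  have hfin : ∀ j ∉ ({0, 1} : Finset ℕ), f j = 0 := fun j hj =>
    le_antisymm (h j (by simp only [mem_insert, mem_singleton] at hj; omega)) (hf j)
  rw [tsum_eq_sum hfin, sum_pair zero_ne_one, hf0] at hsum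
  linarith

theorem configuration_model_alpha0_general (f : ℕ → ℝ) (hnn : ∀ j, 0 ≤ f j) (hf0 : f 0 = 0)
    (hsum : ∑' j : ℕ, f j = 1) (hf1 : f 1 < 1)
    (L α₁ : ℝ) (hα₁ : α₁ ∈ Set.Ioo (0 : ℝ) 1)
    (htail : (fun j : ℕ => 1 - ∑ k ∈ Finset.Icc 1 j, f k)
        ~[atTop] fun j : ℕ => L * (j : ℝ) ^ (-α₁)) :
    ∃! α : ℝ, α ∈ Set.Ioo (0 : ℝ) 1 ∧
      ∑' j : ℕ, f j * ∑ k ∈ Finset.Icc 1 (j - 1), α / ((k : ℝ) - α) = 1 := by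
  have hs : Summable f := by
    by_contra h
    simp [tsum_eq_zero_of_not_summable h] at hsum
  have hT : Summable fun k : ℕ => (∑' j, if k < j then f j else 0) * (k : ℝ)⁻¹ := by
    simpa only [tsum_ite_lt_eq_tsum_sub hs hf0, hsum] using summable_mul_inv_of_isBigO_rpow hα₁.1
      (htail.isBigO.trans (isBigO_const_mul_self L _ atTop))
  obtain ⟨j, hj, hfj⟩ := exists_two_le_and_pos hnn hf0 hsum hf1
  exact existsUnique_weightedSeries_eq hnn (summable_mul_sum_inv_of_summable_tail hnn hs hT) hj hfj
    one_pos

/-- for a pmf (f_j)_{j≥1} with f₁ < 1 and regularly varying tail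
1 − ∑_{k≤j} f_k ∼ L·j^{−α₁}, the equation ∑_j f_j ∑_{k=1}^{j−1} α/(k−α) = 1 has a
unique solution α₀ ∈ (0,1). -/
theorem configuration_model_alpha0 (f : ℕ → ℝ) (hnn : ∀ j, 0 ≤ f j) (hf0 : f 0 = 0)
    (hsum : ∑' j : ℕ, f j = 1) (hf1 : f 1 < 1)
    (L α₁ : ℝ) (hα₁ : α₁ ∈ Set.Ioo (0 : ℝ) 1) (hL : 0 < L)
    (htail : (fun j : ℕ => 1 - ∑ k ∈ Finset.Icc 1 j, f k)
        ~[atTop] fun j : ℕ => L * (j : ℝ) ^ (-α₁)) :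
    ∃! α : ℝ, α ∈ Set.Ioo (0 : ℝ) 1 ∧
      ∑' j : ℕ, f j * ∑ k ∈ Finset.Icc 1 (j - 1), α / ((k : ℝ) - α) = 1 :=
  configuration_model_alpha0_general f hnn hf0 hsum hf1 L α₁ hα₁ htail
end

section
/- Let α₀ ∈ (0,1), c₀ > 0, β > 0, and let μ : (0,∞) → [0,∞) be nonincreasing and right-continuous with μ(x) → 0 as x → ∞, and generalized inverse μ⁻¹(y) := inf{x > 0 : μ(x) ≤ y}. Assume |μ⁻¹(y) − c₀·y^{−α₀}| = O(y^{β−α₀}) as y → 0⁺. Then there exists η > 0 such that, as t → ∞: t·∫₀^∞ (1 − e^{−t·μ(x)}) dx = c₀·Γ(1−α₀)·t^{1+α₀}·(1 + O(t^{−η})) = t·μ⁻¹(1/t)·Γ(1−α₀)·(1 + O(t^{−η})). -/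
/-! By the layer-cake formula, `∫₀^∞ (1 - e^{-tμ(x)}) dx = ∫₀^∞ μ⁻¹(s) t e^{-ts} ds`, because
the superlevel set `{x > 0 | μ x > s}` has Lebesgue measure `μ⁻¹(s)`. Write
`μ⁻¹(s) = c₀ s^{-α₀} + e(s)`. The main term integrates to `c₀ Γ(1 - α₀) t^{α₀}`. The error
satisfies `|e(s)| ≤ M s^{β-α₀} + C s^β` on all of `(0, ∞)`: near `0` by assumption, and away
from `0` because `μ⁻¹` is bounded there. Against the kernel `t e^{-ts}` it therefore contributes
`O(t^{α₀-β})`, so `η = β` works. The second form follows from the assumption at `y = 1/t`. -/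

noncomputable section

open Filter

def muInv (μ : ℝ → ℝ) (y : ℝ) : ℝ := sInf {x : ℝ | 0 < x ∧ μ x ≤ y}

open MeasureTheory Set Real

section muInv

variable {μ : ℝ → ℝ} {y : ℝ}

lemma nonempty_muInv_set (hlim : Tendsto μ atTop (nhds 0)) (hy : 0 < y) :
    {x : ℝ | 0 < x ∧ μ x ≤ y}.Nonempty :=
  ((eventually_gt_atTop 0).and ((hlim.eventually_lt_const hy).mono fun _ h => h.le)).exists

lemma muInv_nonneg (hlim : Tendsto μ atTop (nhds 0)) (hy : 0 < y) : 0 ≤ muInv μ y :=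
  le_csInf (nonempty_muInv_set hlim hy) fun _ hx => hx.1.le

lemma muInv_antitoneOn (hlim : Tendsto μ atTop (nhds 0)) : AntitoneOn (muInv μ) (Ioi 0) :=
  fun _ hy _ _ hyy' => csInf_le_csInf ⟨0, fun _ hx => hx.1.le⟩ (nonempty_muInv_set hlim hy)
    fun _ hx => ⟨hx.1, hx.2.trans hyy'⟩

lemma volume_lt_inter_Ioi_eq_muInv (hmono : AntitoneOn μ (Ioi 0))
    (hlim : Tendsto μ atTop (nhds 0)) (hy : 0 < y) :
    volume ({x | y < μ x} ∩ Ioi 0) = ENNReal.ofReal (muInv μ y) := by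
  have hbdd : BddBelow {x : ℝ | 0 < x ∧ μ x ≤ y} := ⟨0, fun _ hx => hx.1.le⟩
  have hsub : Ioo 0 (muInv μ y) ⊆ {x | y < μ x} ∩ Ioi 0 := fun x hx =>
    ⟨not_le.mp fun h => notMem_of_lt_csInf hx.2 hbdd ⟨hx.1, h⟩, hx.1⟩
  have hsup : {x | y < μ x} ∩ Ioi 0 ⊆ Ioc 0 (muInv μ y) := by
    rintro x ⟨hyx, hx⟩
    refine ⟨hx, not_lt.mp fun h => ?_⟩
    obtain ⟨x', ⟨hx'0, hx'y⟩, hx'x⟩ := exists_lt_of_csInf_lt (nonempty_muInv_set hlim hy) h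
    exact (hyx.trans_le (hmono hx'0 hx hx'x.le)).not_ge hx'y
  refine le_antisymm ?_ ?_
  · simpa using measure_mono (μ := volume) hsup
  · simpa using measure_mono (μ := volume) hsub

end muInv

lemma integral_mul_exp_neg_mul (t b : ℝ) :
    ∫ u in (0 : ℝ)..b, t * exp (-(t * u)) = 1 - exp (-(t * b)) := by
  have hderiv : ∀ u ∈ uIcc 0 b, HasDerivAt (fun u => -exp (-(t * u))) (t * exp (-(t * u))) u :=
    fun u _ => (((hasDerivAt_id u).const_mul t).neg.exp.neg).congr_deriv (by simp; ring)
  rw [intervalIntegral.integral_eq_sub_of_hasDerivAt hderiv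
    ((by fun_prop : Continuous fun u => t * exp (-(t * u))).intervalIntegrable 0 b)]
  simp only [mul_zero, neg_zero, exp_zero]
  ring

lemma integral_one_sub_exp_eq_integral_muInv (μ : ℝ → ℝ) (hmono : AntitoneOn μ (Ioi 0))
    (hnn : ∀ x, 0 < x → 0 ≤ μ x) (hlim : Tendsto μ atTop (nhds 0)) {t : ℝ} (ht : 0 < t) :
    ∫ x in Ioi 0, (1 - exp (-(t * μ x))) = ∫ s in Ioi 0, muInv μ s * (t * exp (-(t * s))) := by
  have hμ_nn : 0 ≤ᵐ[volume.restrict (Ioi 0)] μ :=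
    (ae_restrict_mem measurableSet_Ioi).mono fun x hx => hnn x hx
  have hμ_meas : AEMeasurable μ (volume.restrict (Ioi 0)) :=
    aemeasurable_restrict_of_antitoneOn measurableSet_Ioi hmono
  have layer_cake := lintegral_comp_eq_lintegral_meas_lt_mul _ hμ_nn hμ_meas
    (g := fun s => t * exp (-(t * s)))
    (fun _ _ => (by fun_prop : Continuous _).intervalIntegrable _ _)
    (Eventually.of_forall fun _ => by positivity)
  simp only [integral_mul_exp_neg_mul] at layer_cake
  have hlhs_nn : 0 ≤ᵐ[volume.restrict (Ioi 0)] fun x => 1 - exp (-(t * μ x)) :=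
    hμ_nn.mono fun x hx => by
      simpa using exp_le_one_iff.mpr (neg_nonpos.mpr (mul_nonneg ht.le hx))
  have hrhs_nn : 0 ≤ᵐ[volume.restrict (Ioi 0)] fun s => muInv μ s * (t * exp (-(t * s))) :=
    (ae_restrict_mem measurableSet_Ioi).mono fun s hs =>
      mul_nonneg (muInv_nonneg hlim hs) (by positivity)
  rw [integral_eq_lintegral_of_nonneg_ae hlhs_nn (by fun_prop),
    integral_eq_lintegral_of_nonneg_ae hrhs_nn
      (((aemeasurable_restrict_of_antitoneOn measurableSet_Ioi (muInv_antitoneOn hlim)).mul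
        (by fun_prop)).aestronglyMeasurable),
    layer_cake]
  congr 1
  refine setLIntegral_congr_fun measurableSet_Ioi fun s hs => ?_
  rw [Measure.restrict_apply' measurableSet_Ioi, volume_lt_inter_Ioi_eq_muInv hmono hlim hs,
    ← ENNReal.ofReal_mul (muInv_nonneg hlim hs)]

lemma integral_rpow_mul_exp_neg_mul {q t : ℝ} (hq : -1 < q) (ht : 0 < t) :
    ∫ s in Ioi 0, s ^ q * (t * exp (-(t * s))) = Gamma (q + 1) * t ^ (-q) := by
  have h := integral_rpow_mul_exp_neg_mul_rpow one_pos hq ht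
  simp only [rpow_one, div_one, neg_mul] at h
  simp_rw [mul_left_comm _ t, integral_const_mul, h]
  rw [show -q = 1 + -(q + 1) by ring, rpow_add ht, rpow_one]
  ring

lemma integrableOn_rpow_mul_exp_neg_mul {q t : ℝ} (hq : -1 < q) (ht : 0 < t) :
    IntegrableOn (fun s => s ^ q * (t * exp (-(t * s)))) (Ioi 0) := by
  refine IntegrableOn.congr_fun
    ((integrableOn_rpow_mul_exp_neg_mul_rpow hq one_pos ht).const_mul t) (fun s _ => ?_)
    measurableSet_Ioi
  simp only [rpow_one, neg_mul]
  ring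

section Laplace

variable {f : ℝ → ℝ} {A B p q t : ℝ}

lemma norm_mul_exp_neg_mul_le (ht : 0 ≤ t) {s : ℝ} (hs : |f s| ≤ A * s ^ p + B * s ^ q) :
    ‖f s * (t * exp (-(t * s)))‖ ≤
      A * (s ^ p * (t * exp (-(t * s)))) + B * (s ^ q * (t * exp (-(t * s)))) := by
  rw [norm_mul, norm_of_nonneg (by positivity : 0 ≤ t * exp (-(t * s))), norm_eq_abs]
  linarith [mul_le_mul_of_nonneg_right hs (by positivity : 0 ≤ t * exp (-(t * s)))]

lemma integrableOn_mul_exp_neg_mul_of_abs_le (hp : -1 < p) (hq : -1 < q) (ht : 0 < t)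
    (hbound : ∀ s, 0 < s → |f s| ≤ A * s ^ p + B * s ^ q)
    (hf : AEStronglyMeasurable f (volume.restrict (Ioi 0))) :
    IntegrableOn (fun s => f s * (t * exp (-(t * s)))) (Ioi 0) :=
  Integrable.mono' (((integrableOn_rpow_mul_exp_neg_mul hp ht).const_mul A).add
      ((integrableOn_rpow_mul_exp_neg_mul hq ht).const_mul B)) (hf.mul (by fun_prop))
    ((ae_restrict_mem measurableSet_Ioi).mono fun s hs =>
      norm_mul_exp_neg_mul_le ht.le (hbound s hs))

lemma abs_integral_mul_exp_neg_mul_le (hp : -1 < p) (hq : -1 < q) (ht : 0 < t)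
    (hbound : ∀ s, 0 < s → |f s| ≤ A * s ^ p + B * s ^ q) :
    |∫ s in Ioi 0, f s * (t * exp (-(t * s)))| ≤
      A * Gamma (p + 1) * t ^ (-p) + B * Gamma (q + 1) * t ^ (-q) := by
  have hp_int := integrableOn_rpow_mul_exp_neg_mul hp ht
  have hq_int := integrableOn_rpow_mul_exp_neg_mul hq ht
  rw [← norm_eq_abs]
  calc _ ≤ ∫ s in Ioi 0,
        A * (s ^ p * (t * exp (-(t * s)))) + B * (s ^ q * (t * exp (-(t * s)))) :=
        norm_integral_le_of_norm_le ((hp_int.const_mul A).add (hq_int.const_mul B))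
          ((ae_restrict_mem measurableSet_Ioi).mono fun s hs =>
            norm_mul_exp_neg_mul_le ht.le (hbound s hs))
    _ = _ := by
      rw [integral_add (hp_int.const_mul A) (hq_int.const_mul B), integral_const_mul,
        integral_const_mul, integral_rpow_mul_exp_neg_mul hp ht,
        integral_rpow_mul_exp_neg_mul hq ht]
      ring

end Laplace

section Approximation

variable {g : ℝ → ℝ} {c α β M y₀ : ℝ}

lemma abs_sub_rpow_le_of_antitoneOn (hg : AntitoneOn g (Ioi 0)) (hg0 : ∀ s, 0 < s → 0 ≤ g s)
    (hα : 0 ≤ α) (hβ : 0 ≤ β) (hM : 0 ≤ M) (hy₀ : 0 < y₀)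
    (happ : ∀ y ∈ Ioo 0 y₀, |g y - c * y ^ (-α)| ≤ M * y ^ (β - α)) {s : ℝ} (hs : 0 < s) :
    |g s - c * s ^ (-α)| ≤
      M * s ^ (β - α) + (g y₀ + |c| * y₀ ^ (-α)) * y₀ ^ (-β) * s ^ β := by
  have hC : 0 ≤ g y₀ + |c| * y₀ ^ (-α) := by have := hg0 y₀ hy₀; positivity
  rcases lt_or_ge s y₀ with hsy | hys
  · exact le_add_of_le_of_nonneg (happ s ⟨hs, hsy⟩) (by positivity)
  · have hscale : 1 ≤ y₀ ^ (-β) * s ^ β := by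
      rw [rpow_neg hy₀.le, inv_mul_eq_div, one_le_div (by positivity)]
      exact rpow_le_rpow hy₀.le hys hβ
    calc |g s - c * s ^ (-α)| ≤ |g s| + |c * s ^ (-α)| := abs_sub _ _
      _ ≤ g y₀ + |c| * y₀ ^ (-α) := by
        rw [abs_of_nonneg (hg0 s hs), abs_mul, abs_of_pos (rpow_pos_of_pos hs _)]
        exact add_le_add (hg hy₀ hs hys) (mul_le_mul_of_nonneg_left
          (rpow_le_rpow_of_nonpos hy₀ hys (neg_nonpos.mpr hα)) (abs_nonneg c))
      _ ≤ (g y₀ + |c| * y₀ ^ (-α)) * (y₀ ^ (-β) * s ^ β) := le_mul_of_one_le_right hC hscale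
      _ ≤ _ := by rw [← mul_assoc]; exact le_add_of_nonneg_left (by positivity)

lemma exists_abs_integral_mul_exp_neg_mul_sub_le (hg : AntitoneOn g (Ioi 0))
    (hg0 : ∀ s, 0 < s → 0 ≤ g s) (hα : 0 ≤ α) (hα1 : α < 1) (hβ : 0 ≤ β) (hM : 0 ≤ M)
    (hy₀ : 0 < y₀) (happ : ∀ y ∈ Ioo 0 y₀, |g y - c * y ^ (-α)| ≤ M * y ^ (β - α)) :
    ∃ K, 0 ≤ K ∧ ∀ t, 1 ≤ t →
      |(∫ s in Ioi 0, g s * (t * exp (-(t * s)))) - c * Gamma (1 - α) * t ^ α| ≤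
        K * t ^ (α - β) := by
  have hp : -1 < β - α := by linarith
  have hq : -1 < β := by linarith
  have hbound := fun s (hs : 0 < s) => abs_sub_rpow_le_of_antitoneOn hg hg0 hα hβ hM hy₀ happ hs
  have hC : 0 ≤ (g y₀ + |c| * y₀ ^ (-α)) * y₀ ^ (-β) * Gamma (β + 1) := by
    have := hg0 y₀ hy₀
    have := Gamma_pos_of_pos (by linarith : 0 < β + 1)
    positivity
  have := Gamma_pos_of_pos (by linarith : 0 < β - α + 1)
  refine ⟨M * Gamma (β - α + 1) + (g y₀ + |c| * y₀ ^ (-α)) * y₀ ^ (-β) * Gamma (β + 1),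
    by positivity, fun t ht => ?_⟩
  have ht0 : 0 < t := one_pos.trans_le ht
  have hpow_int := (integrableOn_rpow_mul_exp_neg_mul (q := -α) (by linarith) ht0).const_mul c
  have herr_int := integrableOn_mul_exp_neg_mul_of_abs_le hp hq ht0 hbound
    (((aemeasurable_restrict_of_antitoneOn measurableSet_Ioi hg).sub
      (by fun_prop)).aestronglyMeasurable)
  have hpow :
      ∫ s in Ioi 0, c * (s ^ (-α) * (t * exp (-(t * s)))) = c * Gamma (1 - α) * t ^ α := by
    rw [integral_const_mul, integral_rpow_mul_exp_neg_mul (by linarith) ht0, neg_neg,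
      neg_add_eq_sub, mul_assoc]
  have hsplit : ∫ s in Ioi 0, g s * (t * exp (-(t * s))) =
      (∫ s in Ioi 0, (g s - c * s ^ (-α)) * (t * exp (-(t * s)))) +
        c * Gamma (1 - α) * t ^ α := by
    rw [← hpow, ← integral_add herr_int hpow_int]
    congr 1 with s
    ring
  rw [hsplit, add_sub_cancel_right]
  refine (abs_integral_mul_exp_neg_mul_le hp hq ht0 hbound).trans ?_
  have hdecay : t ^ (-β) ≤ t ^ (α - β) := rpow_le_rpow_of_exponent_le ht (by linarith)
  rw [neg_sub]
  linarith [mul_le_mul_of_nonneg_left hdecay hC]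

lemma abs_sub_rpow_one_div_le {t : ℝ} (hy₀ : 0 < y₀)
    (happ : ∀ y ∈ Ioo 0 y₀, |g y - c * y ^ (-α)| ≤ M * y ^ (β - α)) (ht : y₀⁻¹ < t) :
    |g (1 / t) - c * t ^ α| ≤ M * t ^ (α - β) := by
  have ht0 : 0 < t := (inv_pos.mpr hy₀).trans ht
  have h := happ (1 / t) ⟨by positivity, by rw [one_div]; exact inv_lt_of_inv_lt₀ hy₀ ht⟩
  rw [one_div, inv_rpow ht0.le, inv_rpow ht0.le, ← rpow_neg ht0.le, ← rpow_neg ht0.le, neg_neg,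
    neg_sub] at h
  rwa [one_div]

end Approximation

theorem second_order_number_of_vertices_general (α₀ c₀ β : ℝ) (hα₀ : α₀ ∈ Set.Ioo (0 : ℝ) 1)
    (hβ : 0 < β)
    (μ : ℝ → ℝ) (hmono : AntitoneOn μ (Set.Ioi (0 : ℝ))) (hnn : ∀ x : ℝ, 0 < x → 0 ≤ μ x)
    (hlim : Tendsto μ atTop (nhds 0))
    (happrox : ∃ M : ℝ, 0 < M ∧ ∃ y₀ : ℝ, 0 < y₀ ∧ ∀ y ∈ Set.Ioo (0 : ℝ) y₀,
        |muInv μ y - c₀ * y ^ (-α₀)| ≤ M * y ^ (β - α₀)) :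
    ∃ η : ℝ, 0 < η ∧ ∃ M : ℝ, 0 < M ∧ ∃ t₀ : ℝ, ∀ t : ℝ, t₀ ≤ t →
      |t * (∫ x in Set.Ioi (0 : ℝ), (1 - Real.exp (-(t * μ x)))) -
          c₀ * Real.Gamma (1 - α₀) * t ^ (1 + α₀)| ≤ M * t ^ (1 + α₀ - η) ∧
      |t * (∫ x in Set.Ioi (0 : ℝ), (1 - Real.exp (-(t * μ x)))) -
          t * muInv μ (1 / t) * Real.Gamma (1 - α₀)| ≤ M * t ^ (1 + α₀ - η) := by
  obtain ⟨hα0, hα1⟩ := hα₀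
  obtain ⟨M, hM, y₀, hy₀, happ⟩ := happrox
  obtain ⟨K, hK, hlaplace⟩ := exists_abs_integral_mul_exp_neg_mul_sub_le (muInv_antitoneOn hlim)
    (fun _ hs => muInv_nonneg hlim hs) hα0.le hα1 hβ.le hM.le hy₀ happ
  have hΓ : 0 < Gamma (1 - α₀) := Gamma_pos_of_pos (by linarith)
  refine ⟨β, hβ, K + Gamma (1 - α₀) * M, by positivity, 1 + y₀⁻¹, fun t ht => ?_⟩
  have ht1 : 1 ≤ t := by linarith [inv_pos.mpr hy₀]
  have ht0 : 0 < t := by linarith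
  have hinv : |Gamma (1 - α₀) * muInv μ (1 / t) - c₀ * Gamma (1 - α₀) * t ^ α₀| ≤
      Gamma (1 - α₀) * M * t ^ (α₀ - β) := by
    rw [mul_comm c₀, mul_assoc, ← mul_sub, abs_mul, abs_of_pos hΓ, mul_assoc]
    gcongr
    exact abs_sub_rpow_one_div_le hy₀ happ (by linarith)
  rw [integral_one_sub_exp_eq_integral_muInv μ hmono hnn hlim ht0, rpow_add ht0, rpow_one,
    show 1 + α₀ - β = 1 + (α₀ - β) by ring, rpow_add ht0, rpow_one]
  set I := ∫ s in Ioi 0, muInv μ s * (t * exp (-(t * s)))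
  have hscale : ∀ Z, |Z| ≤ K * t ^ (α₀ - β) + Gamma (1 - α₀) * M * t ^ (α₀ - β) →
      |t * Z| ≤ (K + Gamma (1 - α₀) * M) * (t * t ^ (α₀ - β)) := fun Z hZ => by
    rw [abs_mul, abs_of_pos ht0]
    linarith [mul_le_mul_of_nonneg_left hZ ht0.le]
  constructor
  · convert hscale (I - c₀ * Gamma (1 - α₀) * t ^ α₀) ?_ using 2
    · ring
    · have : 0 ≤ Gamma (1 - α₀) * M * t ^ (α₀ - β) := by positivity
      linarith [hlaplace t ht1]
  · convert hscale _ ((abs_sub _ _).trans (add_le_add (hlaplace t ht1) hinv)) using 2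
    ring

/-- core of supplementary Lemma lem:4: second-order asymptotics of
t·∫₀^∞(1 − e^{−tμ(x)})dx under the second-order tail assumption on μ⁻¹. -/
theorem second_order_number_of_vertices (α₀ c₀ β : ℝ) (hα₀ : α₀ ∈ Set.Ioo (0 : ℝ) 1)
    (hc₀ : 0 < c₀) (hβ : 0 < β)
    (μ : ℝ → ℝ) (hmono : AntitoneOn μ (Set.Ioi (0 : ℝ))) (hnn : ∀ x : ℝ, 0 < x → 0 ≤ μ x)
    (hrc : ∀ x : ℝ, 0 < x → ContinuousWithinAt μ (Set.Ici x) x)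
    (hlim : Tendsto μ atTop (nhds 0))
    (happrox : ∃ M : ℝ, 0 < M ∧ ∃ y₀ : ℝ, 0 < y₀ ∧ ∀ y ∈ Set.Ioo (0 : ℝ) y₀,
        |muInv μ y - c₀ * y ^ (-α₀)| ≤ M * y ^ (β - α₀)) :
    ∃ η : ℝ, 0 < η ∧ ∃ M : ℝ, 0 < M ∧ ∃ t₀ : ℝ, ∀ t : ℝ, t₀ ≤ t →
      |t * (∫ x in Set.Ioi (0 : ℝ), (1 - Real.exp (-(t * μ x)))) -
          c₀ * Real.Gamma (1 - α₀) * t ^ (1 + α₀)| ≤ M * t ^ (1 + α₀ - η) ∧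
      |t * (∫ x in Set.Ioi (0 : ℝ), (1 - Real.exp (-(t * μ x)))) -
          t * muInv μ (1 / t) * Real.Gamma (1 - α₀)| ≤ M * t ^ (1 + α₀ - η) :=
  second_order_number_of_vertices_general α₀ c₀ β hα₀ hβ μ hmono hnn hlim happrox
end
end
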